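/- arXiv:2504.02785 — 2 statements merged into one kernel-verified Lean document; each statement's English description precedes it below -/
import Mathlib

section
/- Nonnegativity and monotonicity of permutation traces of PSD powers: for any matrix σ with 0 ≼ σ ≼ I and any permutation π ∈ S_k, the quantity tr(P(π) · (σ^{a_1} ⊗ ⋯ ⊗ σ^{a_k})) is real and nonnegative for all real exponents a_i ≥ 0, and it is monotone decreasing in each exponent: if a_i ≥ b_i ≥ 0 for all i, then tr(P(π)·(σ^{a_1}⊗⋯⊗σ^{a_k})) ≤ tr(P(π)·(σ^{b_1}⊗⋯⊗σ^{b_k})). -/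
open scoped ComplexOrder

/-- The representation of `S_k` on `(ℂ^d)^{⊗k}` permuting tensor factors. -/
noncomputable def permMatrix (d k : ℕ) (π : Equiv.Perm (Fin k)) :
    Matrix (Fin k → Fin d) (Fin k → Fin d) ℂ :=
  Matrix.of fun f g => if ∀ a, f a = g (π⁻¹ a) then 1 else 0

/-- The tensor product `M₁ ⊗ ⋯ ⊗ M_k` of `d×d` matrices, as a matrix on `(ℂ^d)^{⊗k}`. -/
noncomputable def tensorPow {d k : ℕ} (M : Fin k → Matrix (Fin d) (Fin d) ℂ) :
    Matrix (Fin k → Fin d) (Fin k → Fin d) ℂ :=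
  Matrix.of fun f g => ∏ a, M a (f a) (g a)

/-- The real power `σ^a` of a Hermitian matrix, defined through its spectral decomposition. -/
noncomputable def hermPow {d : ℕ} {σ : Matrix (Fin d) (Fin d) ℂ} (hσ : σ.IsHermitian)
    (a : ℝ) : Matrix (Fin d) (Fin d) ℂ :=
  (hσ.eigenvectorUnitary : Matrix (Fin d) (Fin d) ℂ) *
    Matrix.diagonal (fun i => ((hσ.eigenvalues i ^ a : ℝ) : ℂ)) *
    star (hσ.eigenvectorUnitary : Matrix (Fin d) (Fin d) ℂ)

/-! Diagonalise `σ = U D U*`. Since `U^{⊗k}` commutes with the permutation matrix `P(π)`, the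
trace is unchanged when every factor `σ^{aᵢ}` is replaced by the diagonal `D^{aᵢ}`, and then it
equals `∑_f ∏ᵢ λ_{f i}^{aᵢ}` over the colourings `f` constant on the cycles of `π`. Each term is a
product of powers `λ^a` with `λ ∈ [0, 1]`, which are nonnegative and antitone in `a ≥ 0`. -/

open Matrix Finset

section PermutationTrace

variable {d k : ℕ}

theorem tensorPow_mul (M N : Fin k → Matrix (Fin d) (Fin d) ℂ) :
    tensorPow (fun i => M i * N i) = tensorPow M * tensorPow N := by
  ext f g
  simp only [tensorPow, of_apply, mul_apply, prod_univ_sum, Fintype.piFinset_univ,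
    prod_mul_distrib]

theorem tensorPow_one : tensorPow (fun _ : Fin k => (1 : Matrix (Fin d) (Fin d) ℂ)) = 1 := by
  ext f g
  simp [tensorPow, one_apply, prod_boole, funext_iff]

theorem conjTranspose_tensorPow (M : Fin k → Matrix (Fin d) (Fin d) ℂ) :
    (tensorPow M)ᴴ = tensorPow fun i => (M i)ᴴ := by
  ext f g
  simp [tensorPow, conjTranspose_apply]

theorem permMatrix_apply (π : Equiv.Perm (Fin k)) (f g : Fin k → Fin d) :
    permMatrix d k π f g = if g = f ∘ π then 1 else 0 := by
  refine if_congr ⟨fun h => funext fun i => ?_, fun h i => by simp [h]⟩ rfl rfl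
  simpa using (h (π i)).symm

theorem permMatrix_mul_apply (π : Equiv.Perm (Fin k))
    (A : Matrix (Fin k → Fin d) (Fin k → Fin d) ℂ) (f g : Fin k → Fin d) :
    (permMatrix d k π * A) f g = A (f ∘ π) g := by
  simp [mul_apply, permMatrix_apply]

theorem mul_permMatrix_apply (π : Equiv.Perm (Fin k))
    (A : Matrix (Fin k → Fin d) (Fin k → Fin d) ℂ) (f g : Fin k → Fin d) :
    (A * permMatrix d k π) f g = A f (g ∘ ⇑π⁻¹) := by
  have : ∀ h : Fin k → Fin d, g = h ∘ π ↔ h = g ∘ ⇑π⁻¹ := fun h => by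
    constructor <;> rintro rfl <;> ext <;> simp
  simp [mul_apply, permMatrix_apply, this]

theorem permMatrix_mul_tensorPow_const (π : Equiv.Perm (Fin k)) (U : Matrix (Fin d) (Fin d) ℂ) :
    permMatrix d k π * tensorPow (fun _ => U) = tensorPow (fun _ => U) * permMatrix d k π := by
  ext f g
  rw [permMatrix_mul_apply, mul_permMatrix_apply]
  simp only [tensorPow, of_apply, Function.comp_apply]
  exact (Equiv.prod_comp π⁻¹ _).symm.trans (by simp)

theorem trace_permMatrix_mul_tensorPow (π : Equiv.Perm (Fin k))
    (M : Fin k → Matrix (Fin d) (Fin d) ℂ) :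
    (permMatrix d k π * tensorPow M).trace =
      ∑ f : Fin k → Fin d, ∏ i, M i (f (π i)) (f i) := by
  simp [trace, permMatrix_mul_apply, tensorPow]

theorem trace_permMatrix_mul_tensorPow_unitary_conj (π : Equiv.Perm (Fin k))
    {U : Matrix (Fin d) (Fin d) ℂ} (hU : U ∈ unitaryGroup (Fin d) ℂ)
    (M : Fin k → Matrix (Fin d) (Fin d) ℂ) :
    (permMatrix d k π * tensorPow fun i => U * M i * star U).trace =
      (permMatrix d k π * tensorPow M).trace := by
  set V := tensorPow fun _ : Fin k => U
  have hVV : Vᴴ * V = 1 := by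
    rw [conjTranspose_tensorPow, ← tensorPow_mul, ← tensorPow_one]
    simp only [← star_eq_conjTranspose, Unitary.star_mul_self_of_mem hU]
  have hconj : (tensorPow fun i => U * M i * star U) = V * tensorPow M * Vᴴ := by
    rw [tensorPow_mul, tensorPow_mul, conjTranspose_tensorPow]
    rfl
  rw [hconj]
  calc (permMatrix d k π * (V * tensorPow M * Vᴴ)).trace
      = (V * (permMatrix d k π * tensorPow M) * Vᴴ).trace := by
        rw [← mul_assoc, ← mul_assoc, permMatrix_mul_tensorPow_const, mul_assoc V]
    _ = (Vᴴ * V * (permMatrix d k π * tensorPow M)).trace := by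
        rw [trace_mul_comm, ← mul_assoc]
    _ = (permMatrix d k π * tensorPow M).trace := by rw [hVV, one_mul]

theorem trace_permMatrix_mul_tensorPow_diagonal (π : Equiv.Perm (Fin k))
    (w : Fin k → Fin d → ℂ) :
    (permMatrix d k π * tensorPow fun i => diagonal (w i)).trace =
      ∑ f : Fin k → Fin d, if ∀ i, f (π i) = f i then ∏ i, w i (f i) else 0 := by
  simp only [trace_permMatrix_mul_tensorPow, diagonal_apply, prod_ite_zero,
    mem_univ, true_implies]
  exact sum_congr rfl fun f _ => if_ctx_congr Iff.rfl (fun h => by simp only [h]) fun _ => rfl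

theorem trace_permMatrix_mul_tensorPow_hermPow {σ : Matrix (Fin d) (Fin d) ℂ}
    (hσ : σ.IsHermitian) (π : Equiv.Perm (Fin k)) (a : Fin k → ℝ) :
    (permMatrix d k π * tensorPow fun i => hermPow hσ (a i)).trace =
      ((∑ f : Fin k → Fin d,
        if ∀ i, f (π i) = f i then ∏ i, hσ.eigenvalues (f i) ^ a i else 0 : ℝ) : ℂ) := by
  simp only [hermPow]
  rw [trace_permMatrix_mul_tensorPow_unitary_conj π hσ.eigenvectorUnitary.2,
    trace_permMatrix_mul_tensorPow_diagonal]
  push_cast [apply_ite]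
  rfl

end PermutationTrace

theorem Matrix.IsHermitian.eigenvalues_le_one {n : Type*} [Fintype n] [DecidableEq n]
    {A : Matrix n n ℂ} (hA : A.IsHermitian) (h : (1 - A).PosSemidef) (i : n) :
    hA.eigenvalues i ≤ 1 := by
  have := h.re_dotProduct_nonneg (hA.eigenvectorBasis i)
  rw [sub_mulVec, one_mulVec, dotProduct_sub, map_sub, ← hA.eigenvalues_eq, dotProduct_comm,
    ← EuclideanSpace.inner_eq_star_dotProduct] at this
  simpa [inner_self_eq_norm_sq_to_K, hA.eigenvectorBasis.orthonormal.1 i] using this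

/-- For `0 ≼ σ ≼ I` and any permutation `π ∈ S_k`, the quantity
`tr(P(π)·(σ^{a₁} ⊗ ⋯ ⊗ σ^{a_k}))` is real and nonnegative for all real exponents `aᵢ ≥ 0`,
and it is monotone decreasing in each exponent. -/
theorem stmt13 (d k : ℕ) (σ : Matrix (Fin d) (Fin d) ℂ)
    (hσ : σ.PosSemidef) (hσI : ((1 : Matrix (Fin d) (Fin d) ℂ) - σ).PosSemidef)
    (π : Equiv.Perm (Fin k)) :
    (∀ a : Fin k → ℝ, (∀ i, 0 ≤ a i) →
        ((permMatrix d k π * tensorPow fun i => hermPow hσ.1 (a i)).trace).im = 0 ∧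
        0 ≤ ((permMatrix d k π * tensorPow fun i => hermPow hσ.1 (a i)).trace).re) ∧
      (∀ a b : Fin k → ℝ, (∀ i, 0 ≤ b i) → (∀ i, b i ≤ a i) →
        ((permMatrix d k π * tensorPow fun i => hermPow hσ.1 (a i)).trace).re ≤
          ((permMatrix d k π * tensorPow fun i => hermPow hσ.1 (b i)).trace).re) := by
  have h_nonneg := hσ.eigenvalues_nonneg
  have h_le_one := hσ.1.eigenvalues_le_one hσI
  simp only [trace_permMatrix_mul_tensorPow_hermPow, Complex.ofReal_im, Complex.ofReal_re]
  refine ⟨fun a _ => ⟨trivial, sum_nonneg fun f _ => ?_⟩,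
    fun a b hb hba => sum_le_sum fun f _ => ?_⟩
  · split_ifs
    exacts [prod_nonneg fun i _ => Real.rpow_nonneg (h_nonneg _) _, le_rfl]
  · split_ifs
    exacts [prod_le_prod (fun i _ => Real.rpow_nonneg (h_nonneg _) _) fun i _ =>
      Real.rpow_le_rpow_of_exponent_ge' (h_nonneg _) (h_le_one _) (hb i) (hba i), le_rfl]
end

section
/- Trace-distance PCA error upper bounds fidelity PCA error: let ρ be a d×d density matrix with sorted eigenvalues α_1 ≥ ⋯ ≥ α_d and σ a rank-r PSD matrix with tr(σ) ≤ 1. Then Σ_{i=1}^r α_i + tr(σ) − 2·F(ρ, σ) ≤ ‖ρ − σ‖_1 − Σ_{i=r+1}^d α_i, where ‖·‖_1 is the trace norm and F is the (square-root) fidelity extended to PSD matrices. -/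
open scoped ComplexOrder

/-- The eigenvalues of a Hermitian matrix, sorted in descending order. -/
noncomputable def descEigs {d : ℕ} {A : Matrix (Fin d) (Fin d) ℂ}
    (hA : A.IsHermitian) : Fin d → ℝ :=
  fun i => (hA.eigenvalues ∘ Tuple.sort hA.eigenvalues) i.rev

/-- The positive semidefinite square root of a matrix (junk value `0` off the PSD cone). -/
noncomputable def msqrt {d : ℕ} (A : Matrix (Fin d) (Fin d) ℂ) :
    Matrix (Fin d) (Fin d) ℂ :=
  letI := Classical.propDecidable A.PosSemidef
  if h : A.PosSemidef then
    (h.1.eigenvectorUnitary : Matrix (Fin d) (Fin d) ℂ) *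
      Matrix.diagonal (((↑) : ℝ → ℂ) ∘ Real.sqrt ∘ h.1.eigenvalues) *
      (star h.1.eigenvectorUnitary : Matrix (Fin d) (Fin d) ℂ)
  else 0

/-- The (square-root) fidelity `F(ρ,σ) = tr √(√σ ρ √σ)`, extended to PSD matrices. -/
noncomputable def fid {d : ℕ} (ρ σ : Matrix (Fin d) (Fin d) ℂ) : ℝ :=
  ((msqrt (msqrt σ * ρ * msqrt σ)).trace).re

/-!
The sorted eigenvalues of `ρ` sum to `tr ρ = 1`, so the claim is `1 + tr σ - 2 F(ρ, σ) ≤ ‖ρ - σ‖₁`.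
With `M = √ρ √σ` the fidelity is `tr |M| ≥ Re tr M`, so it suffices to prove the Powers–Størmer
inequality `tr ρ + tr σ - 2 Re tr (√ρ √σ) = ‖√ρ - √σ‖₂² ≤ ‖ρ - σ‖₁`. For it, let `D = √ρ - √σ`
and `W` the sign of `D`, a unitary with `D W = W D = |D|`. Then
`tr ((ρ - σ) W) = tr ((√ρ + √σ) |D|) = tr D² + 2 tr (√σ D⁺) + 2 tr (√ρ D⁻) ≥ tr D²`,
while `Re tr (X W) ≤ tr |X|` for every unitary `W`.
-/

open Matrix
open scoped MatrixOrder

namespace Matrix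

variable {𝕜 : Type*} [RCLike 𝕜] {n : Type*} [Fintype n] [DecidableEq n]

lemma IsHermitian.trace_cfc {A : Matrix n n 𝕜} (hA : A.IsHermitian) (f : ℝ → ℝ) :
    (cfc f A).trace = ∑ i, (f (hA.eigenvalues i) : 𝕜) := by
  rw [hA.cfc_eq, IsHermitian.cfc, Unitary.conjStarAlgAut_apply, trace_mul_cycle,
    Unitary.coe_star_mul_self, one_mul, trace_diagonal]
  rfl

lemma PosSemidef.trace_sqrt {A : Matrix n n 𝕜} (hA : A.PosSemidef) :
    (CFC.sqrt A).trace = ∑ i, (√(hA.1.eigenvalues i) : 𝕜) := by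
  rw [CFC.sqrt_eq_cfc, cfc_nnreal_eq_real _ A hA.nonneg, hA.1.trace_cfc]
  congr 1 with i
  rw [Real.coe_sqrt, Real.coe_toNNReal _ (hA.eigenvalues_nonneg i)]

lemma IsHermitian.re_trace_abs {A : Matrix n n 𝕜} (hA : A.IsHermitian) :
    RCLike.re (CFC.abs A).trace = ∑ i, |hA.eigenvalues i| := by
  rw [CFC.abs_eq_cfc_norm A hA.isSelfAdjoint, hA.trace_cfc]
  simp [Real.norm_eq_abs]

lemma re_conjTranspose_mul_self_apply {m p : Type*} [Fintype m] (X : Matrix m p 𝕜)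
    (k : p) : RCLike.re ((Xᴴ * X) k k) = ∑ j, ‖X j k‖ ^ 2 := by
  simp only [mul_apply, conjTranspose_apply, RCLike.star_def, RCLike.conj_mul, map_sum]
  norm_cast

lemma norm_conjTranspose_mul_apply_le {l m p : Type*} [Fintype m] (Y : Matrix m l 𝕜)
    (X : Matrix m p 𝕜) (i : l) (k : p) :
    ‖(Yᴴ * X) i k‖ ≤ √(RCLike.re ((Yᴴ * Y) i i)) * √(RCLike.re ((Xᴴ * X) k k)) := by
  rw [re_conjTranspose_mul_self_apply, re_conjTranspose_mul_self_apply]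
  calc ‖(Yᴴ * X) i k‖ = ‖∑ j, star (Y j i) * X j k‖ := rfl
    _ ≤ ∑ j, ‖star (Y j i) * X j k‖ := norm_sum_le _ _
    _ = ∑ j, ‖Y j i‖ * ‖X j k‖ := by simp only [norm_mul, norm_star]
    _ ≤ _ := Real.sum_mul_le_sqrt_mul_sqrt _ _ _

lemma re_trace_mul_le_re_trace_abs (M : Matrix n n 𝕜) {U : Matrix n n 𝕜}
    (hU : U ∈ unitary (Matrix n n 𝕜)) :
    RCLike.re (M * U).trace ≤ RCLike.re (CFC.abs M).trace := by
  have hN : (Mᴴ * M).PosSemidef := posSemidef_conjTranspose_mul_self M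
  set V : Matrix n n 𝕜 := (hN.1.eigenvectorUnitary : Matrix n n 𝕜)
  have hV : V ∈ unitary (Matrix n n 𝕜) := hN.1.eigenvectorUnitary.2
  -- Cauchy–Schwarz bounds the `i`-th diagonal entry of `(Uᴴ V)ᴴ (M V)` by `1 * √λᵢ`.
  have htrace : (M * U).trace = ((Uᴴ * V)ᴴ * (M * V)).trace := by
    rw [conjTranspose_mul, conjTranspose_conjTranspose, ← star_eq_conjTranspose,
      ← Matrix.mul_assoc, Matrix.mul_assoc _ U, trace_mul_cycle, Unitary.mul_star_self_of_mem hV,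
      Matrix.one_mul, trace_mul_comm]
  have hY : (Uᴴ * V)ᴴ * (Uᴴ * V) = 1 :=
    Unitary.star_mul_self_of_mem (mul_mem (Unitary.star_mem hU) hV)
  have hX : (M * V)ᴴ * (M * V) = diagonal (RCLike.ofReal ∘ hN.1.eigenvalues) := by
    rw [← hN.1.conjStarAlgAut_star_eigenvectorUnitary, Unitary.conjStarAlgAut_star_apply,
      conjTranspose_mul, ← star_eq_conjTranspose]
    simp only [Matrix.mul_assoc]
    rfl
  rw [htrace, CFC.abs, star_eq_conjTranspose, hN.trace_sqrt, trace, map_sum, map_sum]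
  simp only [RCLike.ofReal_re, diag_apply]
  gcongr with i
  calc RCLike.re (((Uᴴ * V)ᴴ * (M * V)) i i) ≤ ‖((Uᴴ * V)ᴴ * (M * V)) i i‖ := RCLike.re_le_norm _
    _ ≤ _ := norm_conjTranspose_mul_apply_le _ _ _ _
    _ = _ := by rw [hY, hX]; simp

lemma trace_mul_nonneg {A B : Matrix n n 𝕜} (hA : 0 ≤ A) (hB : 0 ≤ B) :
    0 ≤ (A * B).trace := by
  rw [← CFC.sqrt_mul_sqrt_self A, Matrix.mul_assoc, trace_mul_comm]
  exact (conjugate_nonneg_of_nonneg hB (CFC.sqrt_nonneg A)).posSemidef.trace_nonneg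

lemma IsHermitian.exists_unitary_mul_eq_abs {D : Matrix n n 𝕜} (hD : D.IsHermitian) :
    ∃ W ∈ unitary (Matrix n n 𝕜), D * W = CFC.abs D ∧ W * D = CFC.abs D := by
  let s : ℝ → ℝ := fun x => if 0 ≤ x then 1 else -1
  have hs : ContinuousOn s (spectrum ℝ D) := D.finite_real_spectrum.continuousOn s
  have habs : CFC.abs D = cfc (fun x => x * s x) D := by
    rw [CFC.abs_eq_cfc_norm D hD.isSelfAdjoint]
    congr 1 with x
    by_cases hx : 0 ≤ x
    · simp [s, hx, abs_of_nonneg hx]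
    · simp [s, hx, abs_of_neg (not_le.mp hx)]
  refine ⟨cfc s D, ?_, ?_, ?_⟩
  · rw [cfc_unitary_iff s D hD.isSelfAdjoint]
    intro x _
    by_cases hx : 0 ≤ x <;> simp [s, hx]
  · nth_rw 1 [← cfc_id' ℝ D]
    rw [← cfc_mul (fun x => x) s D (by fun_prop) hs, habs]
  · nth_rw 2 [← cfc_id' ℝ D]
    rw [← cfc_mul s (fun x => x) D hs (by fun_prop), habs]
    simp_rw [mul_comm]

theorem re_trace_add_sub_two_mul_sqrt_le {A B : Matrix n n 𝕜} (hA : 0 ≤ A) (hB : 0 ≤ B) :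
    RCLike.re A.trace + RCLike.re B.trace - 2 * RCLike.re (CFC.sqrt A * CFC.sqrt B).trace
      ≤ RCLike.re (CFC.abs (A - B)).trace := by
  set S := CFC.sqrt A
  set T := CFC.sqrt B
  set D := S - T
  have hD : D.IsHermitian := (CFC.sqrt_nonneg A).isSelfAdjoint.sub (CFC.sqrt_nonneg B).isSelfAdjoint
  obtain ⟨W, hW, hDW, hWD⟩ := hD.exists_unitary_mul_eq_abs
  have hAB : A - B = S * S - T * T := by
    rw [CFC.sqrt_mul_sqrt_self A, CFC.sqrt_mul_sqrt_self B]
  have hsymm : ((A - B) * W).trace = ((S + T) * CFC.abs D).trace := by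
    have h : (A - B) * W + (A - B) * W = (S + T) * (D * W) + D * (S + T) * W := by
      rw [hAB]; simp only [D]; noncomm_ring
    have h' := congrArg trace h
    rw [trace_add, trace_add, trace_mul_cycle D, trace_mul_comm (W * D), hDW, hWD] at h'
    linear_combination h' / 2
  have hsplit : (S + T) * CFC.abs D = D * D + (T * D⁺ + S * D⁻) + (T * D⁺ + S * D⁻) := by
    have h (P N : Matrix n n 𝕜) :
        (S + T) * (P + N) = (S - T) * (P - N) + (T * P + S * N) + (T * P + S * N) := by
      noncomm_ring
    rw [← CFC.posPart_add_negPart D, h, CFC.posPart_sub_negPart D]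
  have hDD : RCLike.re (D * D).trace
      = RCLike.re A.trace + RCLike.re B.trace - 2 * RCLike.re (S * T).trace := by
    have h : D * D = S * S + T * T - (S * T + T * S) := by simp only [D]; noncomm_ring
    rw [h, trace_sub, trace_add, trace_add, trace_mul_comm T S, CFC.sqrt_mul_sqrt_self A,
      CFC.sqrt_mul_sqrt_self B, map_sub, map_add, map_add]
    ring
  have hTP : 0 ≤ RCLike.re (T * D⁺).trace :=
    (RCLike.nonneg_iff.mp (trace_mul_nonneg (CFC.sqrt_nonneg B) (CFC.posPart_nonneg D))).1
  have hSN : 0 ≤ RCLike.re (S * D⁻).trace :=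
    (RCLike.nonneg_iff.mp (trace_mul_nonneg (CFC.sqrt_nonneg A) (CFC.negPart_nonneg D))).1
  calc RCLike.re A.trace + RCLike.re B.trace - 2 * RCLike.re (S * T).trace
      = RCLike.re (D * D).trace := hDD.symm
    _ ≤ RCLike.re ((A - B) * W).trace := by
      rw [hsymm, hsplit, trace_add, trace_add, trace_add, map_add, map_add, map_add]
      linarith
    _ ≤ RCLike.re (CFC.abs (A - B)).trace := re_trace_mul_le_re_trace_abs _ hW

end Matrix

lemma msqrt_eq_sqrt {d : ℕ} {A : Matrix (Fin d) (Fin d) ℂ} (hA : A.PosSemidef) :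
    msqrt A = CFC.sqrt A := by
  rw [msqrt, dif_pos hA, CFC.sqrt_eq_cfc, cfc_nnreal_eq_real _ A hA.nonneg, hA.1.cfc_eq,
    IsHermitian.cfc, Unitary.conjStarAlgAut_apply]
  congr 3 with i
  simp [Real.coe_sqrt, max_eq_left (hA.eigenvalues_nonneg i)]

lemma re_trace_sqrt_mul_sqrt_le_fid {d : ℕ} {ρ σ : Matrix (Fin d) (Fin d) ℂ} (hρ : 0 ≤ ρ)
    (hσ : 0 ≤ σ) : (CFC.sqrt ρ * CFC.sqrt σ).trace.re ≤ fid ρ σ := by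
  set M := CFC.sqrt ρ * CFC.sqrt σ
  have hM : msqrt σ * ρ * msqrt σ = star M * M := by
    rw [msqrt_eq_sqrt hσ.posSemidef, star_mul, (CFC.sqrt_nonneg ρ).isSelfAdjoint.star_eq,
      (CFC.sqrt_nonneg σ).isSelfAdjoint.star_eq]
    conv_lhs => rw [← CFC.sqrt_mul_sqrt_self ρ]
    simp only [M, Matrix.mul_assoc]
  rw [fid, hM, msqrt_eq_sqrt (star_mul_self_nonneg M).posSemidef]
  have h := re_trace_mul_le_re_trace_abs M (one_mem _)
  rwa [Matrix.mul_one] at h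

lemma sum_descEigs {d : ℕ} {A : Matrix (Fin d) (Fin d) ℂ} (hA : A.IsHermitian) :
    ∑ i, descEigs hA i = ∑ i, hA.eigenvalues i :=
  Equiv.sum_comp (Fin.revPerm.trans (Tuple.sort hA.eigenvalues)) hA.eigenvalues

theorem stmt17_general (d r : ℕ) (ρ σ : Matrix (Fin d) (Fin d) ℂ)
    (hρ : ρ.PosSemidef) (htr : ρ.trace = 1)
    (hσ : σ.PosSemidef)
    (α : Fin d → ℝ) (hα : α = descEigs hρ.1) :
    (∑ i ∈ Finset.univ.filter (fun i : Fin d => (i : ℕ) < r), α i)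
        + (σ.trace).re - 2 * fid ρ σ
      ≤ (∑ i, |(hρ.1.sub hσ.1).eigenvalues i|)
        - ∑ i ∈ Finset.univ.filter (fun i : Fin d => r ≤ (i : ℕ)), α i := by
  have hsum : (∑ i ∈ Finset.univ.filter (fun i : Fin d => (i : ℕ) < r), α i)
      + ∑ i ∈ Finset.univ.filter (fun i : Fin d => r ≤ (i : ℕ)), α i = 1 := by
    simp_rw [← not_lt, Finset.sum_filter_add_sum_filter_not, hα, sum_descEigs]
    simpa [htr] using congrArg Complex.re (hρ.1.trace_eq_sum_eigenvalues).symm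
  have hfid := re_trace_sqrt_mul_sqrt_le_fid hρ.nonneg hσ.nonneg
  have hPS := re_trace_add_sub_two_mul_sqrt_le hρ.nonneg hσ.nonneg
  rw [(hρ.1.sub hσ.1).re_trace_abs] at hPS
  simp only [RCLike.re_to_complex, htr, Complex.one_re] at hPS
  linarith

/-- Trace-distance PCA error upper bounds fidelity PCA error: for a density matrix `ρ` with
sorted eigenvalues `α₁ ≥ ⋯ ≥ α_d` and a rank-`r` PSD matrix `σ` with `tr(σ) ≤ 1`,
`Σ_{i=1}^r αᵢ + tr(σ) − 2·F(ρ,σ) ≤ ‖ρ − σ‖₁ − Σ_{i=r+1}^d αᵢ`, where the trace norm of the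
Hermitian matrix `ρ − σ` is the sum of the absolute values of its eigenvalues. -/
theorem stmt17 (d r : ℕ) (ρ σ : Matrix (Fin d) (Fin d) ℂ)
    (hρ : ρ.PosSemidef) (htr : ρ.trace = 1)
    (hσ : σ.PosSemidef) (hrank : σ.rank ≤ r) (htrσ : (σ.trace).re ≤ 1)
    (α : Fin d → ℝ) (hα : α = descEigs hρ.1) :
    (∑ i ∈ Finset.univ.filter (fun i : Fin d => (i : ℕ) < r), α i)
        + (σ.trace).re - 2 * fid ρ σ
      ≤ (∑ i, |(hρ.1.sub hσ.1).eigenvalues i|)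
        - ∑ i ∈ Finset.univ.filter (fun i : Fin d => r ≤ (i : ℕ)), α i :=
  stmt17_general d r ρ σ hρ htr hσ α hα
end
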